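/- arXiv:1705.06928 — 2 statements merged into one kernel-verified Lean document; each statement's English description precedes it below -/
import Mathlib

section
/- If a cubic graph G with |V(G)| ≡ 0 (mod 4) admits a Strong Wormald Colouring, then G admits a Strong Ando Colouring: assigning to each vertex the colour of the two like-coloured edges incident with it yields a bisection whose induced monochromatic subgraphs are isomorphic linear forests. -/
open SimpleGraph

/-- Every connected component of the subgraph of `G` induced on `s` has at most `k` vertices. -/
def SmallComponents {V : Type*} (G : SimpleGraph V) (s : Set V) (k : ℕ) : Prop :=
  ∀ c : (G.induce s).ConnectedComponent, c.supp.ncard ≤ k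

/-- A `k`-bisection: the two colour classes `B` and `Bᶜ` have the same cardinality and
every monochromatic component has at most `k` vertices. -/
def IsKBisection {V : Type*} [Fintype V] (G : SimpleGraph V) (k : ℕ) (B : Set V) : Prop :=
  2 * B.ncard = Fintype.card V ∧ SmallComponents G B k ∧ SmallComponents G Bᶜ k

/-- A linear forest: an acyclic graph with all degrees at most 2,
i.e. every connected component is a path. -/
def IsLinearForest {V : Type*} (G : SimpleGraph V) : Prop :=
  G.IsAcyclic ∧ ∀ v : V, (G.neighborSet v).ncard ≤ 2

/-!
Write `G = H ⊔ K` for the two colour classes of edges. At each vertex of the cubic graph one of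
`H`, `K` has degree 2 and the other degree 1, so an isomorphism `φ : H ≃g K` maps
`B = {v | deg_H v = 2}` bijectively onto `Bᶜ`; in particular `|B| = |Bᶜ|`. Since monochromatic
paths have length at least 2, no edge joins two vertices of degree 1 in its colour, so every
edge of `G` inside `B` is in `H` and every edge inside `Bᶜ` is in `K`: `G[B] = H[B]` and
`G[Bᶜ] = K[Bᶜ]`. These are induced subgraphs of linear forests, and `φ` restricts to an
isomorphism between them.
-/

def IsStrongAndoColouring {V : Type*} [Fintype V] (G : SimpleGraph V) (B : Set V) : Prop :=
  2 * B.ncard = Fintype.card V ∧ Nonempty (G.induce B ≃g G.induce Bᶜ) ∧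
    IsLinearForest (G.induce B) ∧ IsLinearForest (G.induce Bᶜ)

lemma IsLinearForest.induce {V : Type*} [Finite V] {H : SimpleGraph V} (h : IsLinearForest H)
    (s : Set V) : IsLinearForest (H.induce s) := by
  refine ⟨h.1.induce s, fun v => ?_⟩
  calc ((H.induce s).neighborSet v).ncard
      = (Subtype.val '' (H.induce s).neighborSet v).ncard :=
        (Set.ncard_image_of_injective _ Subtype.val_injective).symm
    _ ≤ (H.neighborSet v).ncard := Set.ncard_le_ncard (by rintro _ ⟨u, hu, rfl⟩; exact hu)
    _ ≤ 2 := h.2 v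

namespace SimpleGraph

variable {V : Type*} {G H K : SimpleGraph V}

lemma fromEdgeSet_sup_fromEdgeSet_diff {S : Set (Sym2 V)} (hS : S ⊆ G.edgeSet) :
    fromEdgeSet S ⊔ fromEdgeSet (G.edgeSet \ S) = G := by
  rw [← fromEdgeSet_union, Set.union_sdiff_cancel hS, fromEdgeSet_edgeSet]

lemma disjoint_fromEdgeSet_fromEdgeSet_diff (S : Set (Sym2 V)) :
    Disjoint (fromEdgeSet S) (fromEdgeSet (G.edgeSet \ S)) := by
  rw [fromEdgeSet_disjoint, edgeSet_fromEdgeSet]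
  exact Set.disjoint_sdiff_right.mono_right Set.sdiff_subset

lemma ncard_neighborSet_sup [Finite V] (h : Disjoint H K) (v : V) :
    ((H ⊔ K).neighborSet v).ncard = (H.neighborSet v).ncard + (K.neighborSet v).ncard :=
  Set.ncard_union_eq (disjoint_neighborSet.mpr h v)

lemma Iso.ncard_neighborSet (φ : H ≃g K) (v : V) :
    (K.neighborSet (φ v)).ncard = (H.neighborSet v).ncard := by
  simp only [← Nat.card_coe_set_eq]
  exact Nat.card_congr (φ.mapNeighborSet v).symm

lemma IsRegularOfDegree.ncard_neighborSet [Fintype V] [DecidableRel G.Adj] {d : ℕ}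
    (h : G.IsRegularOfDegree d) (v : V) : (G.neighborSet v).ncard = d := by
  rw [Set.ncard_eq_toFinset_card', ← neighborFinset_def]
  exact h v

lemma induce_eq_induce_of_le_sup {s : Set V} (hHG : H ≤ G) (hG : G ≤ H ⊔ K)
    (hK : ∀ u ∈ s, ∀ v ∈ s, ¬K.Adj u v) : G.induce s = H.induce s := by
  ext u v
  refine ⟨fun h => ?_, fun h => hHG h⟩
  exact (hG h).resolve_right (hK u u.2 v v.2)

section CubicDecomposition

variable [Fintype V] [DecidableRel G.Adj] (hG : G.IsRegularOfDegree 3) (hHK : H ⊔ K = G)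
  (hdisj : Disjoint H K) (hH : IsLinearForest H) (hK : IsLinearForest K)
include hG hHK hdisj hH hK

lemma ncard_neighborSet_right_eq_two_iff (v : V) :
    (K.neighborSet v).ncard = 2 ↔ (H.neighborSet v).ncard ≠ 2 := by
  have hsum := ncard_neighborSet_sup hdisj v
  rw [hHK, hG.ncard_neighborSet] at hsum
  have := hH.2 v
  have := hK.2 v
  omega

lemma bijOn_setOf_ncard_neighborSet_eq_two_compl (φ : H ≃g K) :
    Set.BijOn φ {v | (H.neighborSet v).ncard = 2} {v | (H.neighborSet v).ncard = 2}ᶜ := by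
  refine φ.toEquiv.bijOn fun v => ?_
  change (H.neighborSet (φ v)).ncard ≠ 2 ↔ (H.neighborSet v).ncard = 2
  rw [← ncard_neighborSet_right_eq_two_iff hG hHK hdisj hH hK, φ.ncard_neighborSet]

theorem isStrongAndoColouring_of_iso (φ : H ≃g K)
    (hlenH : ∀ u v, H.Adj u v → (H.neighborSet u).ncard = 2 ∨ (H.neighborSet v).ncard = 2)
    (hlenK : ∀ u v, K.Adj u v → (K.neighborSet u).ncard = 2 ∨ (K.neighborSet v).ncard = 2) :
    IsStrongAndoColouring G {v | (H.neighborSet v).ncard = 2} := by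
  set B := {v | (H.neighborSet v).ncard = 2}
  have hbij := bijOn_setOf_ncard_neighborSet_eq_two_compl hG hHK hdisj hH hK φ
  have hGB : G.induce B = H.induce B := by
    refine induce_eq_induce_of_le_sup (hHK ▸ le_sup_left) hHK.ge fun u hu v hv huv => ?_
    rcases hlenK u v huv with hu' | hv'
    · exact (ncard_neighborSet_right_eq_two_iff hG hHK hdisj hH hK u).mp hu' hu
    · exact (ncard_neighborSet_right_eq_two_iff hG hHK hdisj hH hK v).mp hv' hv
  have hGBc : G.induce Bᶜ = K.induce Bᶜ := by
    refine induce_eq_induce_of_le_sup (hHK ▸ le_sup_right) (by rw [← hHK, sup_comm])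
      fun u hu v hv huv => ?_
    rcases hlenH u v huv with hu' | hv'
    exacts [hu hu', hv hv']
  refine ⟨?_, ?_, ?_, ?_⟩
  · rw [two_mul]
    nth_rw 2 [hbij.ncard_eq]
    rw [Set.ncard_add_ncard_compl, Nat.card_eq_fintype_card]
  · rw [hGB, hGBc]
    exact ⟨φ.induce hbij⟩
  · rw [hGB]
    exact hH.induce B
  · rw [hGBc]
    exact hK.induce Bᶜ

end CubicDecomposition

end SimpleGraph

theorem stmt10_general {V : Type*} [Fintype V] (G : SimpleGraph V) [DecidableRel G.Adj]
    (hcubic : G.IsRegularOfDegree 3)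
    (S : Set (Sym2 V)) (hS : S ⊆ G.edgeSet)
    (hlfB : IsLinearForest (SimpleGraph.fromEdgeSet S))
    (hlfW : IsLinearForest (SimpleGraph.fromEdgeSet (G.edgeSet \ S)))
    (hiso : Nonempty ((SimpleGraph.fromEdgeSet S) ≃g
      (SimpleGraph.fromEdgeSet (G.edgeSet \ S))))
    (hlenB : ∀ u v : V, (SimpleGraph.fromEdgeSet S).Adj u v →
      ((SimpleGraph.fromEdgeSet S).neighborSet u).ncard = 2 ∨
      ((SimpleGraph.fromEdgeSet S).neighborSet v).ncard = 2)
    (hlenW : ∀ u v : V, (SimpleGraph.fromEdgeSet (G.edgeSet \ S)).Adj u v →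
      ((SimpleGraph.fromEdgeSet (G.edgeSet \ S)).neighborSet u).ncard = 2 ∨
      ((SimpleGraph.fromEdgeSet (G.edgeSet \ S)).neighborSet v).ncard = 2) :
    2 * {v : V | ((SimpleGraph.fromEdgeSet S).neighborSet v).ncard = 2}.ncard =
        Fintype.card V ∧
    Nonempty (G.induce {v : V | ((SimpleGraph.fromEdgeSet S).neighborSet v).ncard = 2} ≃g
      G.induce {v : V | ((SimpleGraph.fromEdgeSet S).neighborSet v).ncard = 2}ᶜ) ∧
    IsLinearForest
      (G.induce {v : V | ((SimpleGraph.fromEdgeSet S).neighborSet v).ncard = 2}) ∧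
    IsLinearForest
      (G.induce {v : V | ((SimpleGraph.fromEdgeSet S).neighborSet v).ncard = 2}ᶜ) :=
  isStrongAndoColouring_of_iso hcubic (fromEdgeSet_sup_fromEdgeSet_diff hS)
    (disjoint_fromEdgeSet_fromEdgeSet_diff S) hlfB hlfW hiso.some hlenB hlenW

/-- If a cubic graph of order `0 (mod 4)` admits a Strong Wormald Colouring (black edges `S`,
white edges `G.edgeSet \ S`), then colouring each vertex with the colour of the two
like-coloured edges at it yields a bisection whose induced monochromatic subgraphs are
isomorphic linear forests (a Strong Ando Colouring). -/
theorem stmt10 {V : Type*} [Fintype V] (G : SimpleGraph V) [DecidableRel G.Adj]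
    (hcubic : G.IsRegularOfDegree 3) (hmod : Fintype.card V % 4 = 0)
    (S : Set (Sym2 V)) (hS : S ⊆ G.edgeSet)
    (hlfB : IsLinearForest (SimpleGraph.fromEdgeSet S))
    (hlfW : IsLinearForest (SimpleGraph.fromEdgeSet (G.edgeSet \ S)))
    (hiso : Nonempty ((SimpleGraph.fromEdgeSet S) ≃g
      (SimpleGraph.fromEdgeSet (G.edgeSet \ S))))
    (hlenB : ∀ u v : V, (SimpleGraph.fromEdgeSet S).Adj u v →
      ((SimpleGraph.fromEdgeSet S).neighborSet u).ncard = 2 ∨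
      ((SimpleGraph.fromEdgeSet S).neighborSet v).ncard = 2)
    (hlenW : ∀ u v : V, (SimpleGraph.fromEdgeSet (G.edgeSet \ S)).Adj u v →
      ((SimpleGraph.fromEdgeSet (G.edgeSet \ S)).neighborSet u).ncard = 2 ∨
      ((SimpleGraph.fromEdgeSet (G.edgeSet \ S)).neighborSet v).ncard = 2) :
    2 * {v : V | ((SimpleGraph.fromEdgeSet S).neighborSet v).ncard = 2}.ncard =
        Fintype.card V ∧
    Nonempty (G.induce {v : V | ((SimpleGraph.fromEdgeSet S).neighborSet v).ncard = 2} ≃g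
      G.induce {v : V | ((SimpleGraph.fromEdgeSet S).neighborSet v).ncard = 2}ᶜ) ∧
    IsLinearForest
      (G.induce {v : V | ((SimpleGraph.fromEdgeSet S).neighborSet v).ncard = 2}) ∧
    IsLinearForest
      (G.induce {v : V | ((SimpleGraph.fromEdgeSet S).neighborSet v).ncard = 2}ᶜ) :=
  stmt10_general G hcubic S hS hlfB hlfW hiso hlenB hlenW
end

section
/- The graph T_{000}, obtained by taking three disjoint copies of L_0 (where L_0 is K_{3,3} with one edge subdivided by a new vertex) and adding a new vertex adjacent to the three degree-2 vertices, admits a 3-bisection whose two induced monochromatic subgraphs are isomorphic. -/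
/-!
Take for `B` the class consisting of the extra vertex, the vertices `0, 1, 2, 6` of the
first copy of `L₀`, `0, 1, 2` of the second and `2, 4, 5` of the third. Both `T₀₀₀[B]` and
`T₀₀₀[Bᶜ]` are the disjoint union of a path on three vertices, an edge and six isolated
vertices. Every monochromatic component therefore lies in the radius-2 ball around any of its
vertices, and the isomorphism is realised by an involution of the whole vertex set exchanging
`B` and `Bᶜ`.
-/

open SimpleGraph

/-- `L₀`: the complete bipartite graph `K_{3,3}` on parts `{0,1,2}`, `{3,4,5}` with the edge
`2‒5` subdivided by the new vertex `6`. -/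
def L0 : SimpleGraph (Fin 7) :=
  SimpleGraph.fromRel (fun i j =>
    (i.val < 3 ∧ 3 ≤ j.val ∧ j.val < 6 ∧ ¬(i.val = 2 ∧ j.val = 5)) ∨
    (i.val = 2 ∧ j.val = 6) ∨ (i.val = 6 ∧ j.val = 5))

/-- `T₀₀₀`: three disjoint copies of `L₀` together with one extra vertex joined to the
degree-2 vertex (the subdivision vertex `6`) of each copy. -/
def T000 : SimpleGraph ((Fin 3 × Fin 7) ⊕ Unit) :=
  SimpleGraph.fromRel (fun a b =>
    match a, b with
    | .inl (c, i), .inl (c', j) => c = c' ∧ L0.Adj i j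
    | .inl (_, i), .inr _ => i = 6
    | _, _ => False)

namespace SimpleGraph

variable {V : Type*} {G : SimpleGraph V}

theorem Reachable.mem_of_adj_closed {s : Set V} (hs : ∀ a b, a ∈ s → G.Adj a b → b ∈ s)
    {u v : V} (h : G.Reachable u v) (hu : u ∈ s) : v ∈ s := by
  rw [reachable_iff_reflTransGen] at h
  induction h with
  | refl => exact hu
  | tail _ hab ih => exact hs _ _ ih hab

theorem ConnectedComponent.ncard_supp_le_of_adj_closed {S : V → Finset V} {k : ℕ}
    (hmem : ∀ v, v ∈ S v) (hclosed : ∀ v a b, a ∈ S v → G.Adj a b → b ∈ S v)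
    (hcard : ∀ v, (S v).card ≤ k) (c : G.ConnectedComponent) : c.supp.ncard ≤ k := by
  induction c using ConnectedComponent.ind with
  | h v =>
    have hsupp : (G.connectedComponentMk v).supp ⊆ S v := fun u hu =>
      (ConnectedComponent.exact hu).symm.mem_of_adj_closed (hclosed v) (hmem v)
    calc (G.connectedComponentMk v).supp.ncard
        ≤ (S v : Set V).ncard := Set.ncard_le_ncard hsupp (S v).finite_toSet
      _ = (S v).card := Set.ncard_coe_finset _
      _ ≤ k := hcard v

def induceIsoInduceComplOfInvolutive {s : Set V} {σ : V → V} (hσ : Function.Involutive σ)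
    (hs : ∀ x, σ x ∈ s ↔ x ∉ s)
    (hadj : ∀ x ∈ s, ∀ y ∈ s, G.Adj (σ x) (σ y) ↔ G.Adj x y) :
    G.induce s ≃g G.induce sᶜ where
  toEquiv := (hσ.toPerm σ).subtypeEquiv fun x => by
    simp only [Function.Involutive.coe_toPerm, Set.mem_compl_iff, hs, not_not]
  map_rel_iff' {x y} := hadj x x.2 y y.2

variable [Fintype V] [DecidableEq V] [DecidableRel G.Adj]

variable (G) in
def twoBall (v : V) : Finset V :=
  {u | u = v ∨ G.Adj v u ∨ ∃ w, G.Adj v w ∧ G.Adj w u}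

theorem ConnectedComponent.ncard_supp_le_of_twoBall {k : ℕ}
    (hclosed : ∀ v a b, a ∈ G.twoBall v → G.Adj a b → b ∈ G.twoBall v)
    (hcard : ∀ v, (G.twoBall v).card ≤ k) (c : G.ConnectedComponent) : c.supp.ncard ≤ k :=
  c.ncard_supp_le_of_adj_closed (fun v => by simp [twoBall]) hclosed hcard

end SimpleGraph

instance : DecidableRel L0.Adj := by unfold L0; infer_instance

instance : DecidableRel T000.Adj := fun a b => by
  unfold T000
  show Decidable (_ ∧ _)
  rcases a with ⟨c, i⟩ | _ <;> rcases b with ⟨c', j⟩ | _ <;> dsimp only <;> infer_instance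

def T000.colourClass : Finset ((Fin 3 × Fin 7) ⊕ Unit) :=
  {.inr (), .inl (0, 0), .inl (0, 1), .inl (0, 2), .inl (0, 6), .inl (1, 0), .inl (1, 1),
    .inl (1, 2), .inl (2, 2), .inl (2, 4), .inl (2, 5)}

def T000.colourSwap : (Fin 3 × Fin 7) ⊕ Unit → (Fin 3 × Fin 7) ⊕ Unit
  | .inl (c, i) =>
    ![![.inl (2, 6), .inl (1, 4), .inl (2, 1), .inl (2, 5), .inl (1, 2), .inl (1, 1), .inl (2, 3)],
      ![.inl (1, 3), .inl (0, 5), .inl (0, 4), .inl (1, 0), .inl (0, 1), .inl (2, 2), .inl (2, 4)],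
      ![.inr (), .inl (0, 2), .inl (1, 5), .inl (0, 6), .inl (1, 6), .inl (0, 3), .inl (0, 0)]] c i
  | .inr () => .inl (2, 0)

set_option synthInstance.maxSize 400

/-- `T₀₀₀` admits a 3-bisection whose two induced monochromatic subgraphs are isomorphic. -/
theorem stmt17 : ∃ B : Set ((Fin 3 × Fin 7) ⊕ Unit),
    IsKBisection T000 3 B ∧ Nonempty (T000.induce B ≃g T000.induce Bᶜ) := by
  refine ⟨T000.colourClass, ⟨?_, ?_, ?_⟩, ⟨induceIsoInduceComplOfInvolutive
    (by decide : ∀ x, T000.colourSwap (T000.colourSwap x) = x) (by decide) (by decide)⟩⟩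
  · rw [Set.ncard_coe_finset]
    rfl
  all_goals exact ConnectedComponent.ncard_supp_le_of_twoBall (by decide) (by decide)
end
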